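/- For θ, θ′ ∈ ℝ³ with θ₀ > √(θ₁²+θ₂²) and θ₀′ > √(θ₁′²+θ₂′²), the squared Hellinger divergence (f(u) = (√u − 1)²/2) between the 2D hyperboloid distributions p_θ and p_{θ′} equals 1 − 2|θ|^{1/2}|θ′|^{1/2}·exp(|θ|/2 + |θ′|/2) / ( |θ+θ′| · exp(|θ+θ′|/2) ), where |η| = √(η₀²−η₁²−η₂²). -/

import Mathlib

open MeasureTheory

/-- The Minkowski inner product on ℝ³ (as ℝ × ℝ × ℝ). -/
noncomputable def mink3 (θ η : ℝ × ℝ × ℝ) : ℝ :=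
  θ.1 * η.1 - θ.2.1 * η.2.1 - θ.2.2 * η.2.2

/-- The Minkowski norm |θ| = √(θ₀²−θ₁²−θ₂²). -/
noncomputable def mnorm (θ : ℝ × ℝ × ℝ) : ℝ :=
  Real.sqrt (θ.1 ^ 2 - θ.2.1 ^ 2 - θ.2.2 ^ 2)

/-- The parameter space condition θ₀ > √(θ₁²+θ₂²). -/
def inHypParam (θ : ℝ × ℝ × ℝ) : Prop :=
  Real.sqrt (θ.2.1 ^ 2 + θ.2.2 ^ 2) < θ.1

/-- The density of the 2D hyperboloid distribution on ℝ². -/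
noncomputable def hypDensity2 (θ : ℝ × ℝ × ℝ) (x : ℝ × ℝ) : ℝ :=
  mnorm θ * Real.exp (mnorm θ) / (2 * Real.pi) *
    Real.exp (-(θ.1 * Real.sqrt (1 + x.1 ^ 2 + x.2 ^ 2) - θ.2.1 * x.1 - θ.2.2 * x.2)) /
      Real.sqrt (1 + x.1 ^ 2 + x.2 ^ 2)

/-- The f-divergence between two densities on ℝ². -/
noncomputable def fDivL (f : ℝ → ℝ) (p q : ℝ × ℝ → ℝ) : ℝ :=
  ∫ z : ℝ × ℝ, p z * f (q z / p z)

/-!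
Write `p_θ = Z_θ k_θ` with `k_θ x = exp (-(θ₀ S - θ₁ x₁ - θ₂ x₂)) / S`, `S = √(1 + x₁² + x₂²)`.
Since `k_θ k_θ' = k_{(θ+θ')/2}²`, the integrand `p f (q / p) = (p + q) / 2 - √(p q)` reduces the
divergence to `1 - √(Z_θ Z_θ') ∫ k_{(θ+θ')/2}`. Finally `∫ k_θ = 2π e^{-|θ|} / |θ|` by Lorentz
invariance: on each line `x₁ = const` the substitution `x₂ = s sinh u` turns a boost in the
`(θ₀, θ₂)`-plane into a translation in `u`, so two boosts bring `θ` to `(|θ|, 0, 0)`, where polar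
coordinates finish the computation.
-/

open Real Filter Set

theorem mul_add_mul_le_sqrt_mul_sqrt (b c u v : ℝ) :
    b * u + c * v ≤ √(b ^ 2 + c ^ 2) * √(u ^ 2 + v ^ 2) := by
  rw [← sqrt_mul (by positivity)]
  exact (le_abs_self _).trans (abs_le_sqrt (by nlinarith [sq_nonneg (b * v - c * u)]))

theorem inHypParam_iff {θ : ℝ × ℝ × ℝ} :
    inHypParam θ ↔ 0 < θ.1 ∧ θ.2.1 ^ 2 + θ.2.2 ^ 2 < θ.1 ^ 2 := by
  refine ⟨fun h => ?_, fun ⟨hpos, h⟩ => (sqrt_lt' hpos).mpr h⟩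
  have hpos : 0 < θ.1 := (sqrt_nonneg _).trans_lt h
  exact ⟨hpos, (sqrt_lt' hpos).mp h⟩

namespace inHypParam

variable {θ θ' : ℝ × ℝ × ℝ}

theorem mnorm_pos (hθ : inHypParam θ) : 0 < mnorm θ :=
  sqrt_pos.mpr (by linarith [(inHypParam_iff.mp hθ).2])

theorem add (hθ : inHypParam θ) (hθ' : inHypParam θ') : inHypParam (θ + θ') := by
  have hr := sqrt_nonneg (θ.2.1 ^ 2 + θ.2.2 ^ 2)
  have hr' := sqrt_nonneg (θ'.2.1 ^ 2 + θ'.2.2 ^ 2)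
  have hrr := sq_sqrt (add_nonneg (sq_nonneg θ.2.1) (sq_nonneg θ.2.2))
  have hrr' := sq_sqrt (add_nonneg (sq_nonneg θ'.2.1) (sq_nonneg θ'.2.2))
  have hcs := mul_add_mul_le_sqrt_mul_sqrt θ.2.1 θ.2.2 θ'.2.1 θ'.2.2
  have hsum : √((θ.2.1 + θ'.2.1) ^ 2 + (θ.2.2 + θ'.2.2) ^ 2) ≤
      √(θ.2.1 ^ 2 + θ.2.2 ^ 2) + √(θ'.2.1 ^ 2 + θ'.2.2 ^ 2) :=
    sqrt_le_left (by positivity) |>.mpr (by nlinarith)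
  simp only [inHypParam, Prod.fst_add, Prod.snd_add] at hθ hθ' ⊢
  linarith

theorem smul (hθ : inHypParam θ) {c : ℝ} (hc : 0 < c) : inHypParam (c • θ) := by
  obtain ⟨hpos, h⟩ := inHypParam_iff.mp hθ
  refine inHypParam_iff.mpr ⟨?_, ?_⟩ <;>
    simp only [Prod.smul_fst, Prod.smul_snd, smul_eq_mul]
  · positivity
  · nlinarith [mul_pos hc hc]

end inHypParam

theorem mnorm_smul (θ : ℝ × ℝ × ℝ) {c : ℝ} (hc : 0 ≤ c) : mnorm (c • θ) = c * mnorm θ := by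
  simp only [mnorm, Prod.smul_fst, Prod.smul_snd, smul_eq_mul]
  rw [show (c * θ.1) ^ 2 - (c * θ.2.1) ^ 2 - (c * θ.2.2) ^ 2 =
      c ^ 2 * (θ.1 ^ 2 - θ.2.1 ^ 2 - θ.2.2 ^ 2) by ring, sqrt_mul (sq_nonneg c), sqrt_sq hc]

noncomputable def hypKernel (θ : ℝ × ℝ × ℝ) (x : ℝ × ℝ) : ℝ :=
  exp (-(θ.1 * √(1 + x.1 ^ 2 + x.2 ^ 2) - θ.2.1 * x.1 - θ.2.2 * x.2)) / √(1 + x.1 ^ 2 + x.2 ^ 2)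

noncomputable def hypNormConst (θ : ℝ × ℝ × ℝ) : ℝ :=
  mnorm θ * exp (mnorm θ) / (2 * π)

theorem hypDensity2_eq_mul (θ : ℝ × ℝ × ℝ) (x : ℝ × ℝ) :
    hypDensity2 θ x = hypNormConst θ * hypKernel θ x :=
  mul_div_assoc _ _ _

theorem hypKernel_pos (θ : ℝ × ℝ × ℝ) (x : ℝ × ℝ) : 0 < hypKernel θ x :=
  div_pos (exp_pos _) (sqrt_pos.mpr (by positivity))

theorem continuous_hypKernel (θ : ℝ × ℝ × ℝ) : Continuous (hypKernel θ) := by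
  unfold hypKernel
  exact Continuous.div (by fun_prop) (by fun_prop) fun x => (sqrt_pos.mpr (by positivity)).ne'

theorem hypKernel_mul_hypKernel (θ θ' : ℝ × ℝ × ℝ) (x : ℝ × ℝ) :
    hypKernel θ x * hypKernel θ' x = hypKernel ((1 / 2 : ℝ) • (θ + θ')) x ^ 2 := by
  simp only [hypKernel, Prod.smul_fst, Prod.smul_snd, Prod.fst_add, Prod.snd_add, smul_eq_mul]
  rw [div_mul_div_comm, div_pow, ← exp_add, ← sq, ← exp_nat_mul]
  congr 2
  push_cast
  ring

theorem sqrt_hypDensity2_mul_hypDensity2 (θ θ' : ℝ × ℝ × ℝ) (x : ℝ × ℝ) :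
    √(hypDensity2 θ x * hypDensity2 θ' x) =
      √(mnorm θ) * √(mnorm θ') * exp ((mnorm θ + mnorm θ') / 2) / (2 * π) *
        hypKernel ((1 / 2 : ℝ) • (θ + θ')) x := by
  have hm : √(mnorm θ) ^ 2 = mnorm θ := sq_sqrt (sqrt_nonneg _)
  have hm' : √(mnorm θ') ^ 2 = mnorm θ' := sq_sqrt (sqrt_nonneg _)
  have hexp : exp ((mnorm θ + mnorm θ') / 2) ^ 2 = exp (mnorm θ) * exp (mnorm θ') := by
    rw [← exp_nat_mul, ← exp_add]
    ring_nf
  rw [← sqrt_sq (mul_nonneg (div_nonneg (by positivity) (by positivity))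
    (hypKernel_pos _ x).le)]
  congr 1
  rw [hypDensity2_eq_mul, hypDensity2_eq_mul, mul_pow, ← hypKernel_mul_hypKernel, hypNormConst,
    hypNormConst, div_pow, mul_pow, mul_pow, hexp, hm, hm']
  ring

theorem hypKernel_le_exp (θ : ℝ × ℝ × ℝ) (x : ℝ × ℝ) :
    hypKernel θ x ≤ exp (-((θ.1 - √(θ.2.1 ^ 2 + θ.2.2 ^ 2)) * √(1 + x.1 ^ 2 + x.2 ^ 2))) := by
  have hS : 1 ≤ √(1 + x.1 ^ 2 + x.2 ^ 2) :=
    le_sqrt_of_sq_le (by nlinarith [sq_nonneg x.1, sq_nonneg x.2])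
  have hcs : θ.2.1 * x.1 + θ.2.2 * x.2 ≤ √(θ.2.1 ^ 2 + θ.2.2 ^ 2) * √(1 + x.1 ^ 2 + x.2 ^ 2) :=
    (mul_add_mul_le_sqrt_mul_sqrt _ _ _ _).trans <|
      mul_le_mul_of_nonneg_left (sqrt_le_sqrt (by linarith)) (sqrt_nonneg _)
  calc hypKernel θ x ≤ exp (-(θ.1 * √(1 + x.1 ^ 2 + x.2 ^ 2) - θ.2.1 * x.1 - θ.2.2 * x.2)) :=
        div_le_self (exp_pos _).le hS
    _ ≤ _ := exp_le_exp.mpr (by linarith)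

theorem integrable_exp_neg_mul_abs {k : ℝ} (hk : 0 < k) :
    Integrable (fun t : ℝ => exp (-(k * |t|))) := by
  have hIoi : IntegrableOn (fun t : ℝ => exp (-(k * |t|))) (Ioi 0) :=
    (exp_neg_integrableOn_Ioi 0 hk).congr_fun
      (fun t (ht : 0 < t) => by simp [abs_of_pos ht, neg_mul]) measurableSet_Ioi
  rw [← integrableOn_univ, ← Iio_union_Ici (a := (0 : ℝ)), integrableOn_union,
    integrableOn_Ici_iff_integrableOn_Ioi]
  refine ⟨?_, hIoi⟩
  rw [← (Measure.measurePreserving_neg (volume : Measure ℝ)).integrableOn_comp_preimage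
    (Homeomorph.neg ℝ).measurableEmbedding]
  simpa only [Function.comp_def, abs_neg, neg_preimage, neg_Iio, neg_zero] using hIoi

theorem integrable_hypKernel {θ : ℝ × ℝ × ℝ} (hθ : inHypParam θ) : Integrable (hypKernel θ) := by
  set ε := θ.1 - √(θ.2.1 ^ 2 + θ.2.2 ^ 2)
  have hε : 0 < ε := sub_pos.mpr hθ
  have hmaj : Integrable fun x : ℝ × ℝ => exp (-(ε / 2 * |x.1|)) * exp (-(ε / 2 * |x.2|)) := by
    rw [Measure.volume_eq_prod]
    exact (integrable_exp_neg_mul_abs (half_pos hε)).mul_prod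
      (integrable_exp_neg_mul_abs (half_pos hε))
  refine hmaj.mono' (continuous_hypKernel θ).aestronglyMeasurable (ae_of_all _ fun x => ?_)
  have hS : (|x.1| + |x.2|) / 2 ≤ √(1 + x.1 ^ 2 + x.2 ^ 2) :=
    le_sqrt_of_sq_le (by nlinarith [sq_abs x.1, sq_abs x.2, sq_nonneg (|x.1| - |x.2|)])
  rw [norm_of_nonneg (hypKernel_pos θ x).le, ← exp_add]
  refine (hypKernel_le_exp θ x).trans (exp_le_exp.mpr ?_)
  nlinarith [mul_le_mul_of_nonneg_left hS hε.le]

theorem integral_mul_cosh_smul_comp_mul_sinh {E : Type*} [NormedAddCommGroup E] [NormedSpace ℝ E]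
    {s : ℝ} (hs : 0 < s) (F : ℝ → E) :
    ∫ u, (s * cosh u) • F (s * sinh u) = ∫ t, F t := by
  have himg : (fun u => s * sinh u) '' univ = univ :=
    eq_univ_of_forall fun t => ⟨arsinh (t / s), trivial, by simp only [sinh_arsinh]; field_simp⟩
  have h := integral_image_eq_integral_abs_deriv_smul MeasurableSet.univ
    (fun u _ => ((hasDerivAt_sinh u).const_mul s).hasDerivWithinAt)
    (fun u _ v _ huv => sinh_injective (mul_left_cancel₀ hs.ne' huv)) F
  rw [himg, Measure.restrict_univ] at h
  simp_rw [h, abs_of_pos (mul_pos hs (cosh_pos _))]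

theorem integral_exp_hyperbolic_eq_integral_cosh {s : ℝ} (hs : 0 < s) (A C : ℝ) :
    ∫ t, exp (-(A * √(s ^ 2 + t ^ 2) - C * t)) / √(s ^ 2 + t ^ 2) =
      ∫ u, exp (-(s * (A * cosh u - C * sinh u))) := by
  rw [← integral_mul_cosh_smul_comp_mul_sinh hs]
  refine integral_congr_ae (ae_of_all _ fun u => ?_)
  have hsc : 0 < s * cosh u := mul_pos hs (cosh_pos u)
  have hroot : √(s ^ 2 + (s * sinh u) ^ 2) = s * cosh u := by
    rw [← sqrt_sq hsc.le, mul_pow, mul_pow, cosh_sq]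
    ring_nf
  simp only [smul_eq_mul, hroot]
  rw [mul_div_cancel₀ _ hsc.ne']
  ring_nf

theorem mul_cosh_sub_mul_sinh {A C : ℝ} (h : |C| < A) (u : ℝ) :
    A * cosh u - C * sinh u = √(A ^ 2 - C ^ 2) * cosh (u - arsinh (C / √(A ^ 2 - C ^ 2))) := by
  have hAC : 0 < A ^ 2 - C ^ 2 := by
    nlinarith [abs_nonneg C, sq_abs C]
  set m := √(A ^ 2 - C ^ 2)
  have hm : 0 < m := sqrt_pos.mpr hAC
  have hm2 : m ^ 2 = A ^ 2 - C ^ 2 := sq_sqrt hAC.le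
  have hA : 0 < A := (abs_nonneg C).trans_lt h
  have hcosh : cosh (arsinh (C / m)) = A / m := by
    rw [cosh_arsinh, show 1 + (C / m) ^ 2 = (A / m) ^ 2 by field_simp; linarith,
      sqrt_sq (by positivity)]
  rw [cosh_sub, sinh_arsinh, hcosh]
  field_simp

theorem integral_exp_hyperbolic_boost {s A C : ℝ} (hs : 0 < s) (h : |C| < A) :
    ∫ t, exp (-(A * √(s ^ 2 + t ^ 2) - C * t)) / √(s ^ 2 + t ^ 2) =
      ∫ t, exp (-(√(A ^ 2 - C ^ 2) * √(s ^ 2 + t ^ 2) - 0 * t)) / √(s ^ 2 + t ^ 2) := by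
  simp_rw [integral_exp_hyperbolic_eq_integral_cosh hs, mul_cosh_sub_mul_sinh h, zero_mul, sub_zero]
  exact integral_sub_right_eq_self (fun u => exp (-(s * (√(A ^ 2 - C ^ 2) * cosh u)))) _

theorem hypKernel_apply_eq_exp_mul {s x₁ : ℝ} (hs : s ^ 2 = 1 + x₁ ^ 2) (a b c x₂ : ℝ) :
    hypKernel (a, b, c) (x₁, x₂) =
      exp (b * x₁) * (exp (-(a * √(s ^ 2 + x₂ ^ 2) - c * x₂)) / √(s ^ 2 + x₂ ^ 2)) := by
  rw [hypKernel, hs, mul_div_assoc', ← exp_add]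
  ring_nf

theorem integral_hypKernel_boost {a b c : ℝ} (h : inHypParam (a, b, c)) :
    ∫ x, hypKernel (a, b, c) x = ∫ x, hypKernel (√(a ^ 2 - c ^ 2), b, 0) x := by
  obtain ⟨ha, hbc⟩ := inHypParam_iff.mp h
  have hac : 0 ≤ a ^ 2 - c ^ 2 := by nlinarith [sq_nonneg b]
  have h' : inHypParam (√(a ^ 2 - c ^ 2), b, 0) :=
    inHypParam_iff.mpr ⟨sqrt_pos.mpr (by nlinarith [sq_nonneg b]), by
      rw [sq_sqrt hac]; dsimp only; linarith⟩
  have hca : |c| < a := abs_lt_of_sq_lt_sq (by nlinarith [sq_nonneg b]) ha.le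
  have hint := integrable_hypKernel h
  have hint' := integrable_hypKernel h'
  rw [Measure.volume_eq_prod] at hint hint' ⊢
  rw [integral_prod _ hint, integral_prod _ hint']
  congr 1 with x₁
  have hs : √(1 + x₁ ^ 2) ^ 2 = 1 + x₁ ^ 2 := sq_sqrt (by positivity)
  simp_rw [hypKernel_apply_eq_exp_mul hs]
  rw [integral_const_mul, integral_const_mul,
    integral_exp_hyperbolic_boost (sqrt_pos.mpr (by positivity)) hca]

theorem integral_hypKernel_swap (a b c : ℝ) :
    ∫ x, hypKernel (a, b, c) x = ∫ x, hypKernel (a, c, b) x := by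
  rw [Measure.volume_eq_prod, ← integral_prod_swap]
  congr 1 with x
  simp only [hypKernel, Prod.fst_swap, Prod.snd_swap]
  ring_nf

theorem integral_Ioi_mul_exp_neg_mul_sqrt_one_add_sq_div {m : ℝ} (hm : 0 < m) :
    ∫ r in Ioi (0 : ℝ), r * exp (-(m * √(1 + r ^ 2))) / √(1 + r ^ 2) = exp (-m) / m := by
  have hderiv : ∀ r : ℝ, HasDerivAt (fun t => -exp (-(m * √(1 + t ^ 2))) / m)
      (r * exp (-(m * √(1 + r ^ 2))) / √(1 + r ^ 2)) r := by
    intro r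
    have hsqrt : HasDerivAt (fun t => √(1 + t ^ 2)) (2 * r / (2 * √(1 + r ^ 2))) r := by
      simpa using ((hasDerivAt_pow 2 r).const_add 1).sqrt (by positivity)
    refine ((((hsqrt.const_mul m).neg.exp).neg).div_const m).congr_deriv ?_
    simp only [Pi.neg_apply]
    field_simp
  have hlim : Tendsto (fun t => -exp (-(m * √(1 + t ^ 2))) / m) atTop (nhds 0) := by
    have hS : Tendsto (fun t : ℝ => √(1 + t ^ 2)) atTop atTop :=
      tendsto_atTop_mono (fun t => le_sqrt_of_sq_le (by simp)) tendsto_id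
    simpa using ((tendsto_exp_atBot.comp
      (tendsto_neg_atTop_atBot.comp (hS.const_mul_atTop hm))).neg).div_const m
  rw [integral_Ioi_of_hasDerivAt_of_nonneg' (fun r _ => hderiv r)
    (fun r (hr : 0 < r) => by positivity) hlim]
  simp [neg_div]

theorem integral_hypKernel_rest {m : ℝ} (hm : 0 < m) :
    ∫ x, hypKernel (m, 0, 0) x = 2 * π * exp (-m) / m := by
  rw [← integral_comp_polarCoord_symm]
  have hpolar : ∀ p : ℝ × ℝ, p.1 • hypKernel (m, 0, 0) (polarCoord.symm p) =
      p.1 * exp (-(m * √(1 + p.1 ^ 2))) / √(1 + p.1 ^ 2) := by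
    rintro ⟨r, φ⟩
    have hr : (r * cos φ) ^ 2 + (r * sin φ) ^ 2 = r ^ 2 := by
      rw [mul_pow, mul_pow, ← mul_add, cos_sq_add_sin_sq, mul_one]
    simp only [hypKernel, polarCoord_symm_apply, smul_eq_mul, add_assoc, hr]
    ring_nf
  have hfubini := setIntegral_prod_mul (μ := volume) (ν := volume)
    (fun r => r * exp (-(m * √(1 + r ^ 2))) / √(1 + r ^ 2)) (fun _ => (1 : ℝ)) (Ioi 0) (Ioo (-π) π)
  simp only [mul_one] at hfubini
  simp_rw [hpolar]
  rw [polarCoord_target, Measure.volume_eq_prod, hfubini,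
    integral_Ioi_mul_exp_neg_mul_sqrt_one_add_sq_div hm, setIntegral_const, measureReal_def,
    volume_Ioo, ENNReal.toReal_ofReal (by linarith [pi_pos])]
  simp only [smul_eq_mul, mul_one]
  ring

theorem integral_hypKernel {θ : ℝ × ℝ × ℝ} (hθ : inHypParam θ) :
    ∫ x, hypKernel θ x = 2 * π * exp (-mnorm θ) / mnorm θ := by
  obtain ⟨a, b, c⟩ := θ
  obtain ⟨ha, hbc⟩ := inHypParam_iff.mp hθ
  have hac : (√(a ^ 2 - c ^ 2)) ^ 2 = a ^ 2 - c ^ 2 := sq_sqrt (by nlinarith [sq_nonneg b])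
  have h' : inHypParam (√(a ^ 2 - c ^ 2), 0, b) :=
    inHypParam_iff.mpr ⟨sqrt_pos.mpr (by nlinarith [sq_nonneg b]), by
      rw [hac]; dsimp only; linarith⟩
  have hm : mnorm (a, b, c) = √((√(a ^ 2 - c ^ 2)) ^ 2 - b ^ 2) := by
    rw [mnorm, hac]; ring_nf
  rw [integral_hypKernel_boost hθ, integral_hypKernel_swap, integral_hypKernel_boost h', hm,
    integral_hypKernel_rest (by rw [← hm]; exact hθ.mnorm_pos)]

theorem fDivL_hellinger_eq {p q : ℝ × ℝ → ℝ} (hp : ∀ z, 0 < p z) (hq : ∀ z, 0 ≤ q z)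
    (hpi : Integrable p) (hqi : Integrable q) :
    fDivL (fun u => (√u - 1) ^ 2 / 2) p q = ((∫ z, p z) + ∫ z, q z) / 2 - ∫ z, √(p z * q z) := by
  have hpoint : ∀ z, p z * ((√(q z / p z) - 1) ^ 2 / 2) = (p z + q z) / 2 - √(p z * q z) := by
    intro z
    have hP := sq_sqrt (hp z).le
    have hQ := sq_sqrt (hq z)
    rw [sqrt_div (hq z), sqrt_mul (hp z).le]
    field_simp [(sqrt_pos.mpr (hp z)).ne']
    nlinarith
  have hmean : Integrable fun z => (p z + q z) / 2 := (hpi.add hqi).div_const 2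
  -- AM-GM: `√(p q) ≤ (p + q) / 2`
  have hsqrt : Integrable fun z => √(p z * q z) := by
    refine hmean.mono'
      (continuous_sqrt.comp_aestronglyMeasurable
        (hpi.aestronglyMeasurable.mul hqi.aestronglyMeasurable)) (ae_of_all _ fun z => ?_)
    have hP := sq_sqrt (hp z).le
    have hQ := sq_sqrt (hq z)
    rw [norm_of_nonneg (sqrt_nonneg _), sqrt_mul (hp z).le]
    nlinarith [sq_nonneg (√(p z) - √(q z))]
  rw [fDivL, integral_congr_ae (ae_of_all _ hpoint),
    integral_sub hmean hsqrt, integral_div, integral_add hpi hqi]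

section hypDensity2

variable {θ : ℝ × ℝ × ℝ}

theorem hypDensity2_pos (hθ : inHypParam θ) (x : ℝ × ℝ) : 0 < hypDensity2 θ x := by
  have := hθ.mnorm_pos
  rw [hypDensity2_eq_mul, hypNormConst]
  exact mul_pos (by positivity) (hypKernel_pos θ x)

theorem integrable_hypDensity2 (hθ : inHypParam θ) : Integrable (hypDensity2 θ) :=
  ((integrable_hypKernel hθ).const_mul (hypNormConst θ)).congr
    (ae_of_all _ fun x => (hypDensity2_eq_mul θ x).symm)

theorem integral_hypDensity2 (hθ : inHypParam θ) : ∫ x, hypDensity2 θ x = 1 := by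
  have hm := hθ.mnorm_pos
  simp_rw [hypDensity2_eq_mul]
  rw [integral_const_mul, integral_hypKernel hθ, hypNormConst, exp_neg]
  field_simp

end hypDensity2

/-- closed form of the squared Hellinger divergence
(f(u) = (√u − 1)²/2) between two 2D hyperboloid distributions. -/
theorem hellinger_hyperboloid2 (θ θ' : ℝ × ℝ × ℝ) (hθ : inHypParam θ) (hθ' : inHypParam θ') :
    fDivL (fun u => (Real.sqrt u - 1) ^ 2 / 2) (hypDensity2 θ) (hypDensity2 θ') =
      1 - 2 * mnorm θ ^ ((1 : ℝ) / 2) * mnorm θ' ^ ((1 : ℝ) / 2) *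
          Real.exp (mnorm θ / 2 + mnorm θ' / 2) /
        (mnorm (θ + θ') * Real.exp (mnorm (θ + θ') / 2)) := by
  have hM := (hθ.add hθ').mnorm_pos
  rw [fDivL_hellinger_eq (hypDensity2_pos hθ) (fun z => (hypDensity2_pos hθ' z).le)
    (integrable_hypDensity2 hθ) (integrable_hypDensity2 hθ'), integral_hypDensity2 hθ,
    integral_hypDensity2 hθ']
  simp_rw [sqrt_hypDensity2_mul_hypDensity2]
  rw [integral_const_mul, integral_hypKernel ((hθ.add hθ').smul one_half_pos),
    mnorm_smul _ one_half_pos.le, ← sqrt_eq_rpow, ← sqrt_eq_rpow, exp_neg]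
  field_simp
  ring
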